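/- arXiv:1204.1740 — 2 statements merged into one kernel-verified Lean document; each statement's English description precedes it below -/
import Mathlib

section
/- Let T > 0, let U ⊂ ℝ^r be a convex compact set, let C > 0, and let 𝒦 be the set of C-Lipschitz functions u : [0,T] → U. Let φ : ℝ^n × ℝ^r → ℝ^n be globally Lipschitz and let f : ℝ^n × ℝ^r → ℝ be continuous. For each u ∈ 𝒦 let x_u : [0,T] → ℝ^n be the unique continuous solution of the integral equation x_u(t) = x₀ + ∫₀ᵗ φ(x_u(τ), u(τ)) dτ. Then for every t ∈ [0,T] the set D(t) = { (x_u(t), ∫₀ᵗ f(x_u(τ), u(τ)) dτ, u(t)) : u ∈ 𝒦 } is a compact (closed and bounded) subset of ℝ^n × ℝ × ℝ^r. -/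
/-!
Restricting controls to `[0, T]` identifies the admissible controls with the `C`-Lipschitz paths
`[0, T] → U`, a compact set of bounded continuous functions by Arzelà–Ascoli. By Grönwall's
inequality the trajectory depends Lipschitz-continuously on the control in the sup distance, and
only on its restriction to `[0, T]`. Hence state, accumulated cost and control at time `t` are a
continuous function of the path, and `D(t)` is a continuous image of a compact set.
-/

open MeasureTheory Set
open scoped NNReal BoundedContinuousFunction

theorem gronwallBound_zero_mul_self (K ε x : ℝ) :
    gronwallBound 0 K (K * ε) x = ε * (Real.exp (K * x) - 1) := by
  by_cases hK : K = 0
  · simp [gronwallBound_K0, hK]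
  · rw [gronwallBound_of_K_ne_0 hK]
    field_simp
    ring

theorem LipschitzWith.IccExtend {α : Type*} [PseudoMetricSpace α] {a b : ℝ} (h : a ≤ b)
    {g : Icc a b → α} {K : ℝ≥0} (hg : LipschitzWith K g) : LipschitzWith K (Set.IccExtend h g) := by
  rw [← mul_one K]
  exact hg.comp (.projIcc h)

theorem BoundedContinuousFunction.isCompact_setOf_lipschitzWith {α β : Type*}
    [PseudoMetricSpace α] [CompactSpace α] [MetricSpace β] (K : ℝ≥0) {s : Set β}
    (hs : IsCompact s) : IsCompact {g : α →ᵇ β | LipschitzWith K g ∧ ∀ a, g a ∈ s} := by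
  refine arzela_ascoli₂ s hs _ ?_ (fun g a hg => hg.2 a)
    (LipschitzWith.uniformEquicontinuous _ K fun g => g.2.1).equicontinuous
  simp only [ofPred_and, ofPred_forall]
  exact ((isClosed_setOfPred_lipschitzWith (α := α) (β := β) K).preimage
    (continuous_coe (α := α) (β := β))).inter
    (isClosed_iInter fun a => hs.isClosed.preimage (continuous_eval_const a))

theorem LipschitzOnWith.exists_boundedContinuousFunction_eqOn_IccExtend {α : Type*}
    [PseudoMetricSpace α] {a b : ℝ} (h : a ≤ b) {u : ℝ → α} {K : ℝ≥0}
    (hu : LipschitzOnWith K u (Icc a b)) :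
    ∃ g : Icc a b →ᵇ α, LipschitzWith K g ∧ (∀ s, g s = u s) ∧ EqOn (IccExtend h g) u (Icc a b) :=
  ⟨.mkOfCompact ⟨(Icc a b).domRestrict u, hu.continuousOn.domRestrict⟩, hu.to_restrict,
    fun _ => rfl, fun s hs => by simp [IccExtend_of_mem h _ hs]⟩

section IntegralEquation

variable {E V W : Type*} [NormedAddCommGroup E] [NormedSpace ℝ E] [CompleteSpace E]
  [PseudoMetricSpace V] [NormedAddCommGroup W] [NormedSpace ℝ W] {a b t : ℝ} {y₀ : E}

theorem hasDerivWithinAt_Ici_of_eq_integral {g y : ℝ → E}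
    (hg : ContinuousOn g (Icc a b)) (hy : ∀ s ∈ Icc a b, y s = y₀ + ∫ τ in a..s, g τ)
    (ht : t ∈ Ico a b) : HasDerivWithinAt y (g t) (Ici t) t := by
  have ht' : t ∈ Icc a b := Ico_subset_Icc_self ht
  have : Fact (t ∈ Icc a b) := ⟨ht'⟩
  have hint : IntervalIntegrable g volume a t :=
    (hg.mono (uIcc_of_le ht.1 ▸ Icc_subset_Icc_right ht.2.le)).intervalIntegrable
  have hprim : HasDerivWithinAt (fun s => y₀ + ∫ τ in a..s, g τ) (g t) (Icc a b) t :=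
    (intervalIntegral.integral_hasDerivWithinAt_right hint
      (hg.stronglyMeasurableAtFilter_nhdsWithin measurableSet_Icc t) (hg t ht')).const_add y₀
  exact (hprim.congr hy (hy t ht')).mono_of_mem_nhdsWithin (Icc_mem_nhdsGE_of_mem ht)

variable {φ : E → V → E} {L : ℝ≥0} {F : E → V → W}

theorem dist_le_of_eq_integral_of_lipschitzWith (hφ : LipschitzWith L (Function.uncurry φ))
    {u v : ℝ → V} {y z : ℝ → E} {d : ℝ} (hu : ContinuousOn u (Icc a b))
    (hv : ContinuousOn v (Icc a b)) (hy : ContinuousOn y (Icc a b))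
    (hz : ContinuousOn z (Icc a b))
    (hy_eq : ∀ s ∈ Icc a b, y s = y₀ + ∫ τ in a..s, φ (y τ) (u τ))
    (hz_eq : ∀ s ∈ Icc a b, z s = y₀ + ∫ τ in a..s, φ (z τ) (v τ))
    (huv : ∀ s ∈ Icc a b, dist (u s) (v s) ≤ d) :
    ∀ s ∈ Icc a b, dist (y s) (z s) ≤ d * (Real.exp (L * (b - a)) - 1) := by
  intro s hs
  have hd : 0 ≤ d := dist_nonneg.trans (huv s hs)
  have hcont {w : ℝ → V} {x : ℝ → E} (hw : ContinuousOn w (Icc a b))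
      (hx : ContinuousOn x (Icc a b)) : ContinuousOn (fun τ => φ (x τ) (w τ)) (Icc a b) :=
    hφ.continuous.comp_continuousOn (hx.prodMk hw)
  have hy_approx : ∀ τ ∈ Ico a b, dist (φ (y τ) (u τ)) (φ (y τ) (v τ)) ≤ L * d := fun τ hτ =>
    calc dist (φ (y τ) (u τ)) (φ (y τ) (v τ)) ≤ L * dist (u τ) (v τ) := by
          simpa [Prod.dist_eq] using hφ.dist_le_mul (y τ, u τ) (y τ, v τ)
      _ ≤ L * d := by gcongr; exact huv τ (Ico_subset_Icc_self hτ)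
  have hy₀ : dist (y a) (z a) ≤ 0 := by
    simp [hy_eq a (left_mem_Icc.2 (hs.1.trans hs.2)), hz_eq a (left_mem_Icc.2 (hs.1.trans hs.2))]
  calc dist (y s) (z s) ≤ gronwallBound 0 L (L * d + 0) (s - a) :=
        dist_le_of_approx_trajectories_ODE (v := fun τ e => φ e (v τ))
          (fun τ => hφ.comp (LipschitzWith.prodMk_right (v τ)) |>.weaken (by simp)) hy
          (fun τ hτ => hasDerivWithinAt_Ici_of_eq_integral (hcont hu hy) hy_eq hτ) hy_approx hz
          (fun τ hτ => hasDerivWithinAt_Ici_of_eq_integral (hcont hv hz) hz_eq hτ)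
          (fun τ _ => (dist_self _).le) hy₀ s hs
    _ ≤ d * (Real.exp (L * (b - a)) - 1) := by
      rw [add_zero, gronwallBound_zero_mul_self]
      gcongr
      exact hs.2

theorem eqOn_of_eq_integral_of_lipschitzWith (hφ : LipschitzWith L (Function.uncurry φ))
    {u v : ℝ → V} {y z : ℝ → E} (hu : ContinuousOn u (Icc a b))
    (hv : ContinuousOn v (Icc a b)) (hy : ContinuousOn y (Icc a b))
    (hz : ContinuousOn z (Icc a b))
    (hy_eq : ∀ s ∈ Icc a b, y s = y₀ + ∫ τ in a..s, φ (y τ) (u τ))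
    (hz_eq : ∀ s ∈ Icc a b, z s = y₀ + ∫ τ in a..s, φ (z τ) (v τ))
    (huv : EqOn u v (Icc a b)) : EqOn y z (Icc a b) := fun s hs => by
  simpa using dist_le_of_eq_integral_of_lipschitzWith (d := 0) hφ hu hv hy hz hy_eq hz_eq
    (fun s hs => by rw [huv hs, dist_self]) s hs

theorem continuous_projIcc_of_eq_integral_of_lipschitzWith
    (hφ : LipschitzWith L (Function.uncurry φ)) (hab : a ≤ b) {P : Type*} [PseudoMetricSpace P]
    {u : P → ℝ → V} {y : P → ℝ → E} (hu : ∀ p, ContinuousOn (u p) (Icc a b))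
    (hy : ∀ p, ContinuousOn (y p) (Icc a b))
    (hy_eq : ∀ p, ∀ s ∈ Icc a b, y p s = y₀ + ∫ τ in a..s, φ (y p τ) (u p τ))
    (hu_dist : ∀ p q, ∀ s ∈ Icc a b, dist (u p s) (u q s) ≤ dist p q) :
    Continuous fun q : P × ℝ => y q.1 (projIcc a b hab q.2) := by
  have hB : 0 ≤ Real.exp (L * (b - a)) - 1 :=
    sub_nonneg.2 (Real.one_le_exp (mul_nonneg L.2 (sub_nonneg.2 hab)))
  refine continuous_prod_of_continuous_lipschitzWith _ (Real.toNNReal (Real.exp (L * (b - a)) - 1))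
    (fun p => (hy p).comp_continuous continuous_projIcc.subtype_val fun τ => (projIcc a b hab τ).2)
    (fun τ => LipschitzWith.of_dist_le_mul fun p q => ?_)
  rw [Real.coe_toNNReal _ hB, mul_comm]
  exact dist_le_of_eq_integral_of_lipschitzWith hφ (hu p) (hu q) (hy p) (hy q) (hy_eq p) (hy_eq q)
    (hu_dist p q) _ (projIcc a b hab τ).2

theorem continuous_stateCost_of_eq_integral (hφ : LipschitzWith L (Function.uncurry φ))
    (hF : Continuous (Function.uncurry F)) (ht : t ∈ Icc a b) {P : Type*} [PseudoMetricSpace P]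
    {u : P → ℝ → V} {y : P → ℝ → E} (hu : Continuous (Function.uncurry u))
    (hy : ∀ p, ContinuousOn (y p) (Icc a b))
    (hy_eq : ∀ p, ∀ s ∈ Icc a b, y p s = y₀ + ∫ τ in a..s, φ (y p τ) (u p τ))
    (hu_dist : ∀ p q, ∀ s ∈ Icc a b, dist (u p s) (u q s) ≤ dist p q) :
    Continuous fun p => (y p t, ∫ τ in a..t, F (y p τ) (u p τ), u p t) := by
  have hab : a ≤ b := ht.1.trans ht.2
  have hY := continuous_projIcc_of_eq_integral_of_lipschitzWith hφ hab
    (fun p => (hu.comp (Continuous.prodMk_right p)).continuousOn) hy hy_eq hu_dist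
  have hsub : uIcc a t ⊆ Icc a b := uIcc_of_le ht.1 ▸ Icc_subset_Icc_right ht.2
  have hproj {s} (hs : s ∈ Icc a b) : (projIcc a b hab s : ℝ) = s := by rw [projIcc_of_mem hab hs]
  have hcost := intervalIntegral.continuous_parametric_intervalIntegral_of_continuous'
    (μ := volume) (f := fun p τ => F (y p (projIcc a b hab τ)) (u p τ)) (hF.comp (hY.prodMk hu)) a t
  refine ((hY.comp (.prodMk_left t)).prodMk (hcost.prodMk (hu.comp (.prodMk_left t)))).congr
    fun p => ?_
  refine Prod.ext (by simp only [Function.comp, hproj ht]) (Prod.ext ?_ rfl)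
  exact intervalIntegral.integral_congr fun τ hτ => by simp only [hproj (hsub hτ)]

theorem stateCost_eq_of_eqOn (hφ : LipschitzWith L (Function.uncurry φ)) {u v : ℝ → V}
    {y z : ℝ → E} (hu : ContinuousOn u (Icc a b)) (hv : ContinuousOn v (Icc a b))
    (hy : ContinuousOn y (Icc a b)) (hz : ContinuousOn z (Icc a b))
    (hy_eq : ∀ s ∈ Icc a b, y s = y₀ + ∫ τ in a..s, φ (y τ) (u τ))
    (hz_eq : ∀ s ∈ Icc a b, z s = y₀ + ∫ τ in a..s, φ (z τ) (v τ))
    (huv : EqOn u v (Icc a b)) (ht : t ∈ Icc a b) :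
    (y t, ∫ τ in a..t, F (y τ) (u τ), u t) = (z t, ∫ τ in a..t, F (z τ) (v τ), v t) := by
  have hyz := eqOn_of_eq_integral_of_lipschitzWith hφ hu hv hy hz hy_eq hz_eq huv
  have hsub : uIcc a t ⊆ Icc a b := uIcc_of_le ht.1 ▸ Icc_subset_Icc_right ht.2
  refine Prod.ext (hyz ht) (Prod.ext ?_ (huv ht))
  exact intervalIntegral.integral_congr fun τ hτ => by simp only [hyz (hsub hτ), huv (hsub hτ)]

end IntegralEquation

theorem statement0_general {n r : ℕ} (T : ℝ)
    (U : Set (EuclideanSpace ℝ (Fin r))) (hUcomp : IsCompact U)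
    (C : ℝ)
    (φ : EuclideanSpace ℝ (Fin n) → EuclideanSpace ℝ (Fin r) → EuclideanSpace ℝ (Fin n))
    (L : NNReal) (hφ : LipschitzWith L (Function.uncurry φ))
    (f : EuclideanSpace ℝ (Fin n) → EuclideanSpace ℝ (Fin r) → ℝ)
    (hf : Continuous (Function.uncurry f))
    (x₀ : EuclideanSpace ℝ (Fin n))
    (𝒦 : Set (ℝ → EuclideanSpace ℝ (Fin r)))
    (h𝒦 : 𝒦 = {u | LipschitzOnWith (Real.toNNReal C) u (Icc 0 T) ∧ ∀ t ∈ Icc 0 T, u t ∈ U})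
    (x : (ℝ → EuclideanSpace ℝ (Fin r)) → ℝ → EuclideanSpace ℝ (Fin n))
    (hxsol : ∀ u ∈ 𝒦, ContinuousOn (x u) (Icc 0 T) ∧
      ∀ t ∈ Icc 0 T, x u t = x₀ + ∫ τ in (0:ℝ)..t, φ (x u τ) (u τ)) :
    ∀ t ∈ Icc 0 T,
      IsCompact {p : EuclideanSpace ℝ (Fin n) × ℝ × EuclideanSpace ℝ (Fin r) |
        ∃ u ∈ 𝒦, p = (x u t, ∫ τ in (0:ℝ)..t, f (x u τ) (u τ), u t)} := by
  intro t ht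
  have hT₀ : (0:ℝ) ≤ T := ht.1.trans ht.2
  have mem_𝒦 {u} : u ∈ 𝒦 ↔ LipschitzOnWith C.toNNReal u (Icc 0 T) ∧ ∀ s ∈ Icc 0 T, u s ∈ U := by
    rw [h𝒦, mem_ofPred_eq]
  let 𝒦' := {g : Icc 0 T →ᵇ EuclideanSpace ℝ (Fin r) | LipschitzWith C.toNNReal g ∧ ∀ s, g s ∈ U}
  have : CompactSpace 𝒦' := isCompact_iff_compactSpace.mp
    (BoundedContinuousFunction.isCompact_setOf_lipschitzWith _ hUcomp)
  let ext (g : 𝒦') : ℝ → EuclideanSpace ℝ (Fin r) := IccExtend hT₀ g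
  have hext (g : 𝒦') : ext g ∈ 𝒦 :=
    mem_𝒦.2 ⟨(g.2.1.IccExtend hT₀).lipschitzOnWith, fun _ _ => g.2.2 _⟩
  have hcont {u} (hu : u ∈ 𝒦) : ContinuousOn u (Icc 0 T) := (mem_𝒦.1 hu).1.continuousOn
  have hΨ : Continuous fun g : 𝒦' =>
      (x (ext g) t, ∫ τ in (0:ℝ)..t, f (x (ext g) τ) (ext g τ), ext g t) :=
    continuous_stateCost_of_eq_integral hφ hf ht (by fun_prop) (fun g => (hxsol _ (hext g)).1)
      (fun g => (hxsol _ (hext g)).2) fun g g' s _ => BoundedContinuousFunction.dist_coe_le_dist _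
  convert isCompact_range hΨ
  ext p
  constructor
  · rintro ⟨u, hu, rfl⟩
    obtain ⟨g, hg, hgu, hgu'⟩ := (mem_𝒦.1 hu).1.exists_boundedContinuousFunction_eqOn_IccExtend hT₀
    refine ⟨⟨g, hg, fun s => hgu s ▸ (mem_𝒦.1 hu).2 s s.2⟩, ?_⟩
    exact stateCost_eq_of_eqOn hφ (hcont (hext _)) (hcont hu) (hxsol _ (hext _)).1 (hxsol u hu).1
      (hxsol _ (hext _)).2 (hxsol u hu).2 hgu' ht
  · rintro ⟨g, rfl⟩
    exact ⟨ext g, hext g, rfl⟩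

/-- For a control system with Lipschitz right-hand side, continuous cost
integrand, and admissible controls the `C`-Lipschitz functions `u : [0,T] → U` (with `U`
convex compact), the set
`D(t) = {(x_u(t), ∫₀ᵗ f(x_u(τ), u(τ)) dτ, u(t)) : u ∈ 𝒦}` is compact for each `t ∈ [0,T]`. -/
theorem statement0 {n r : ℕ} (T : ℝ) (hT : 0 < T)
    (U : Set (EuclideanSpace ℝ (Fin r))) (hUconv : Convex ℝ U) (hUcomp : IsCompact U)
    (C : ℝ) (hC : 0 < C)
    (φ : EuclideanSpace ℝ (Fin n) → EuclideanSpace ℝ (Fin r) → EuclideanSpace ℝ (Fin n))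
    (L : NNReal) (hφ : LipschitzWith L (Function.uncurry φ))
    (f : EuclideanSpace ℝ (Fin n) → EuclideanSpace ℝ (Fin r) → ℝ)
    (hf : Continuous (Function.uncurry f))
    (x₀ : EuclideanSpace ℝ (Fin n))
    (𝒦 : Set (ℝ → EuclideanSpace ℝ (Fin r)))
    (h𝒦 : 𝒦 = {u | LipschitzOnWith (Real.toNNReal C) u (Icc 0 T) ∧ ∀ t ∈ Icc 0 T, u t ∈ U})
    (x : (ℝ → EuclideanSpace ℝ (Fin r)) → ℝ → EuclideanSpace ℝ (Fin n))
    (hxsol : ∀ u ∈ 𝒦, ContinuousOn (x u) (Icc 0 T) ∧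
      ∀ t ∈ Icc 0 T, x u t = x₀ + ∫ τ in (0:ℝ)..t, φ (x u τ) (u τ))
    (hxuniq : ∀ u ∈ 𝒦, ∀ y : ℝ → EuclideanSpace ℝ (Fin n), ContinuousOn y (Icc 0 T) →
      (∀ t ∈ Icc 0 T, y t = x₀ + ∫ τ in (0:ℝ)..t, φ (y τ) (u τ)) →
      ∀ t ∈ Icc 0 T, y t = x u t) :
    ∀ t ∈ Icc 0 T,
      IsCompact {p : EuclideanSpace ℝ (Fin n) × ℝ × EuclideanSpace ℝ (Fin r) |
        ∃ u ∈ 𝒦, p = (x u t, ∫ τ in (0:ℝ)..t, f (x u τ) (u τ), u t)} :=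
  statement0_general T U hUcomp C φ L hφ f hf x₀ 𝒦 h𝒦 x hxsol
end

section
/- Let T > 0, let U ⊂ ℝ^r be a convex compact set, and let φ : ℝ^n × ℝ^r → ℝ^n be globally Lipschitz in both variables. For a control u : [0,T] → U let x_u denote the unique continuous solution of x_u(t) = x₀ + ∫₀ᵗ φ(x_u(τ), u(τ)) dτ. If measurable controls u_k converge to a control u in the L¹ metric, i.e. ∫₀ᵀ ‖u_k(τ) − u(τ)‖ dτ → 0, then the trajectories x_{u_k} converge uniformly on [0,T] to the trajectory x_u. -/
open MeasureTheory Set Filter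

open scoped Topology NNReal

/-!
Subtracting the integral equations of `x_{u_k}` and `x_u` and using the Lipschitz bound on `φ`
gives `‖x_{u_k} t - x_u t‖ ≤ L ρ₁(u_k, u) + L ∫₀ᵗ ‖x_{u_k} - x_u‖` on `[0, T]`, so Grönwall's
inequality bounds the distance of the trajectories uniformly by `L ρ₁(u_k, u) e^{LT}`.
The integrands are integrable because a continuous trajectory together with a control taking
values in the compact set `U` stays in a compact set, on which `φ` is bounded.
-/

theorem LipschitzWith.norm_sub_le_of_uncurry {E F G : Type*} [SeminormedAddCommGroup E]
    [SeminormedAddCommGroup F] [SeminormedAddCommGroup G] {φ : E → F → G} {L : ℝ≥0}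
    (hφ : LipschitzWith L (Function.uncurry φ)) (a c : E) (b d : F) :
    ‖φ a b - φ c d‖ ≤ L * (‖a - c‖ + ‖b - d‖) := by
  have h := hφ.dist_le_mul (a, b) (c, d)
  simp only [Function.uncurry_apply_pair, dist_eq_norm] at h
  exact h.trans (by gcongr; exact max_le_add_of_nonneg (norm_nonneg _) (norm_nonneg _))

theorem IsCompact.integrableOn_of_mapsTo {α E : Type*} [MeasurableSpace α] [NormedAddCommGroup E]
    {μ : Measure α} {s : Set α} {K : Set E} {f : α → E} (hK : IsCompact K)
    (hs : MeasurableSet s) (hμs : μ s ≠ ⊤) (hf : AEStronglyMeasurable f (μ.restrict s))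
    (hfK : MapsTo f s K) : IntegrableOn f s μ := by
  obtain ⟨M, hM⟩ := hK.isBounded.exists_norm_le
  refine ⟨hf, .restrict_of_bounded M hμs.lt_top ?_⟩
  filter_upwards [ae_restrict_mem hs] with τ hτ using hM _ (hfK hτ)

theorem le_mul_exp_of_le_add_mul_integral {f : ℝ → ℝ} {a b δ K : ℝ} (hK : 0 ≤ K)
    (hf : ContinuousOn f (Icc a b))
    (h : ∀ t ∈ Icc a b, f t ≤ δ + K * ∫ τ in a..t, f τ) :
    ∀ t ∈ Icc a b, f t ≤ δ * Real.exp (K * (t - a)) := by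
  set F : ℝ → ℝ := fun t => ∫ τ in a..t, f τ
  have hF_deriv : ∀ t ∈ Icc a b, HasDerivWithinAt F (f t) (Icc a b) t := fun t ht => by
    have : Fact (t ∈ Icc a b) := ⟨ht⟩
    exact intervalIntegral.integral_hasDerivWithinAt_right
      ((hf.mono (Icc_subset_Icc le_rfl ht.2)).intervalIntegrable_of_Icc ht.1)
      (hf.stronglyMeasurableAtFilter_nhdsWithin measurableSet_Icc t) (hf t ht)
  -- `F' = f ≤ K F + δ` with `F a = 0`, so the differential Grönwall bound applies to `F`.
  have hF_gronwall : ∀ t ∈ Icc a b, F t ≤ gronwallBound 0 K δ (t - a) := by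
    refine le_gronwallBound_of_liminf_deriv_right_le (f' := f)
      (fun t ht => (hF_deriv t ht).continuousWithinAt) (fun t ht r hr => ?_) (by simp [F])
      (fun t ht => by linarith [h t (Ico_subset_Icc_self ht)])
    simpa [slope_def_field, div_eq_inv_mul] using
      ((hF_deriv t (Ico_subset_Icc_self ht)).mono_of_mem_nhdsWithin
        (Icc_mem_nhdsGE_of_mem ht)).liminf_right_slope_le hr
  intro t ht
  rcases hK.eq_or_lt with rfl | hK
  · simpa using h t ht
  · have hFt : F t ≤ δ / K * (Real.exp (K * (t - a)) - 1) := by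
      simpa [gronwallBound_of_K_ne_0 hK.ne'] using hF_gronwall t ht
    calc f t ≤ δ + K * F t := h t ht
      _ ≤ δ + K * (δ / K * (Real.exp (K * (t - a)) - 1)) := by gcongr
      _ = δ * Real.exp (K * (t - a)) := by field_simp; ring

section ContinuousDependence

variable {E F : Type*} [NormedAddCommGroup E] [NormedSpace ℝ E] [SeminormedAddCommGroup F]
  {φ : E → F → E} {L : ℝ≥0} {X Y : ℝ → E} {v w : ℝ → F} {x₀ : E} {a b : ℝ}

theorem norm_sub_le_add_mul_integral_of_integral_eq (hφ : LipschitzWith L (Function.uncurry φ))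
    (hX : ContinuousOn X (Icc a b)) (hY : ContinuousOn Y (Icc a b))
    (hXeq : ∀ t ∈ Icc a b, X t = x₀ + ∫ τ in a..t, φ (X τ) (v τ))
    (hYeq : ∀ t ∈ Icc a b, Y t = x₀ + ∫ τ in a..t, φ (Y τ) (w τ))
    (hXint : IntegrableOn (fun τ => φ (X τ) (v τ)) (Icc a b))
    (hYint : IntegrableOn (fun τ => φ (Y τ) (w τ)) (Icc a b))
    (hvw : IntegrableOn (fun τ => ‖v τ - w τ‖) (Icc a b)) {t : ℝ} (ht : t ∈ Icc a b) :
    ‖X t - Y t‖ ≤ L * (∫ τ in a..b, ‖v τ - w τ‖) + L * ∫ τ in a..t, ‖X τ - Y τ‖ := by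
  have hsub : Icc a t ⊆ Icc a b := Icc_subset_Icc le_rfl ht.2
  have hXt := (intervalIntegrable_iff_integrableOn_Icc_of_le ht.1).2 (hXint.mono_set hsub)
  have hYt := (intervalIntegrable_iff_integrableOn_Icc_of_le ht.1).2 (hYint.mono_set hsub)
  have hvwt := (intervalIntegrable_iff_integrableOn_Icc_of_le ht.1).2 (hvw.mono_set hsub)
  have hXYt : IntervalIntegrable (fun τ => ‖X τ - Y τ‖) volume a t :=
    ((hX.sub hY).norm.mono hsub).intervalIntegrable_of_Icc ht.1
  calc ‖X t - Y t‖ = ‖∫ τ in a..t, (φ (X τ) (v τ) - φ (Y τ) (w τ))‖ := by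
        rw [hXeq t ht, hYeq t ht, intervalIntegral.integral_sub hXt hYt, add_sub_add_left_eq_sub]
    _ ≤ ∫ τ in a..t, ‖φ (X τ) (v τ) - φ (Y τ) (w τ)‖ :=
        intervalIntegral.norm_integral_le_integral_norm ht.1
    _ ≤ ∫ τ in a..t, (L * ‖v τ - w τ‖ + L * ‖X τ - Y τ‖) := by
        refine intervalIntegral.integral_mono_on ht.1 (hXt.sub hYt).norm
          ((hvwt.const_mul _).add (hXYt.const_mul _)) fun τ _ => ?_
        linarith [hφ.norm_sub_le_of_uncurry (X τ) (Y τ) (v τ) (w τ)]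
    _ = L * (∫ τ in a..t, ‖v τ - w τ‖) + L * ∫ τ in a..t, ‖X τ - Y τ‖ := by
        rw [intervalIntegral.integral_add (hvwt.const_mul _) (hXYt.const_mul _),
          intervalIntegral.integral_const_mul, intervalIntegral.integral_const_mul]
    _ ≤ L * (∫ τ in a..b, ‖v τ - w τ‖) + L * ∫ τ in a..t, ‖X τ - Y τ‖ := by
        gcongr
        exact intervalIntegral.integral_mono_interval le_rfl ht.1 ht.2
          (.of_forall fun _ => norm_nonneg _)
          ((intervalIntegrable_iff_integrableOn_Icc_of_le (ht.1.trans ht.2)).2 hvw)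

theorem norm_sub_le_of_integral_eq (hφ : LipschitzWith L (Function.uncurry φ))
    (hX : ContinuousOn X (Icc a b)) (hY : ContinuousOn Y (Icc a b))
    (hXeq : ∀ t ∈ Icc a b, X t = x₀ + ∫ τ in a..t, φ (X τ) (v τ))
    (hYeq : ∀ t ∈ Icc a b, Y t = x₀ + ∫ τ in a..t, φ (Y τ) (w τ))
    (hXint : IntegrableOn (fun τ => φ (X τ) (v τ)) (Icc a b))
    (hYint : IntegrableOn (fun τ => φ (Y τ) (w τ)) (Icc a b))
    (hvw : IntegrableOn (fun τ => ‖v τ - w τ‖) (Icc a b)) {t : ℝ} (ht : t ∈ Icc a b) :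
    ‖X t - Y t‖ ≤ L * (∫ τ in a..b, ‖v τ - w τ‖) * Real.exp (L * (b - a)) := by
  have hδ : 0 ≤ L * ∫ τ in a..b, ‖v τ - w τ‖ :=
    mul_nonneg L.2 (intervalIntegral.integral_nonneg (ht.1.trans ht.2) fun _ _ => norm_nonneg _)
  calc ‖X t - Y t‖ ≤ L * (∫ τ in a..b, ‖v τ - w τ‖) * Real.exp (L * (t - a)) :=
        le_mul_exp_of_le_add_mul_integral L.2 (hX.sub hY).norm
          (fun s hs => norm_sub_le_add_mul_integral_of_integral_eq hφ hX hY hXeq hYeq hXint hYint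
            hvw hs) t ht
    _ ≤ L * (∫ τ in a..b, ‖v τ - w τ‖) * Real.exp (L * (b - a)) := by
        gcongr
        exact ht.2

end ContinuousDependence

theorem statement5_general {n r : ℕ} (T : ℝ)
    (U : Set (EuclideanSpace ℝ (Fin r))) (hUcomp : IsCompact U)
    (φ : EuclideanSpace ℝ (Fin n) → EuclideanSpace ℝ (Fin r) → EuclideanSpace ℝ (Fin n))
    (L : NNReal) (hφ : LipschitzWith L (Function.uncurry φ))
    (x₀ : EuclideanSpace ℝ (Fin n))
    (isControl : (ℝ → EuclideanSpace ℝ (Fin r)) → Prop)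
    (hisControl : ∀ v, isControl v ↔ Measurable v ∧ ∀ τ ∈ Icc 0 T, v τ ∈ U)
    (x : (ℝ → EuclideanSpace ℝ (Fin r)) → ℝ → EuclideanSpace ℝ (Fin n))
    (hxsol : ∀ v, isControl v → ContinuousOn (x v) (Icc 0 T) ∧
      ∀ t ∈ Icc 0 T, x v t = x₀ + ∫ τ in (0:ℝ)..t, φ (x v τ) (v τ))
    (u : ℕ → ℝ → EuclideanSpace ℝ (Fin r)) (ulim : ℝ → EuclideanSpace ℝ (Fin r))
    (hu : ∀ k, isControl (u k)) (hulim : isControl ulim)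
    (huconv : Tendsto (fun k => ∫ τ in (0:ℝ)..T, ‖u k τ - ulim τ‖) atTop (nhds 0)) :
    TendstoUniformlyOn (fun k => x (u k)) (x ulim) atTop (Icc 0 T) := by
  have hint : ∀ v, isControl v →
      IntegrableOn v (Icc 0 T) ∧ IntegrableOn (fun τ => φ (x v τ) (v τ)) (Icc 0 T) := by
    intro v hv
    obtain ⟨hvm, hvU⟩ := (hisControl v).1 hv
    have hX := (hxsol v hv).1
    refine ⟨hUcomp.integrableOn_of_mapsTo measurableSet_Icc measure_Icc_lt_top.ne
      hvm.aestronglyMeasurable hvU, ?_⟩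
    exact (((isCompact_Icc.image_of_continuousOn hX).prod hUcomp).image hφ.continuous
      ).integrableOn_of_mapsTo measurableSet_Icc measure_Icc_lt_top.ne
      (hφ.continuous.comp_aestronglyMeasurable
        ((hX.aestronglyMeasurable measurableSet_Icc).prodMk hvm.aestronglyMeasurable))
      fun τ hτ => mem_image_of_mem _ (mk_mem_prod (mem_image_of_mem _ hτ) (hvU τ hτ))
  have hdist : ∀ k, ∀ t ∈ Icc 0 T, dist (x ulim t) (x (u k) t) ≤
      L * (∫ τ in (0:ℝ)..T, ‖u k τ - ulim τ‖) * Real.exp (L * (T - 0)) := fun k t ht => by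
    rw [dist_comm, dist_eq_norm]
    exact norm_sub_le_of_integral_eq hφ (hxsol _ (hu k)).1 (hxsol _ hulim).1 (hxsol _ (hu k)).2
      (hxsol _ hulim).2 (hint _ (hu k)).2 (hint _ hulim).2
      ((hint _ (hu k)).1.sub (hint _ hulim).1).norm ht
  have hbound : Tendsto (fun k => L * (∫ τ in (0:ℝ)..T, ‖u k τ - ulim τ‖) *
      Real.exp (L * (T - 0))) atTop (𝓝 0) := by
    simpa using (huconv.const_mul (L : ℝ)).mul_const (Real.exp (L * (T - 0)))
  rw [Metric.tendstoUniformlyOn_iff]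
  intro ε hε
  filter_upwards [hbound.eventually_lt_const hε] with k hk t ht
  exact (hdist k t ht).trans_lt hk

/-- For a globally Lipschitz right-hand side `φ`, if measurable controls
`u_k : [0,T] → U` converge to a control `u` in the L¹ metric, i.e.
`∫₀ᵀ ‖u_k(τ) − u(τ)‖ dτ → 0`, then the corresponding
trajectories `x_{u_k}` (the unique continuous solutions of
`x(t) = x₀ + ∫₀ᵗ φ(x(τ), u(τ)) dτ`) converge uniformly on `[0,T]` to `x_u`. -/
theorem statement5 {n r : ℕ} (T : ℝ) (hT : 0 < T)
    (U : Set (EuclideanSpace ℝ (Fin r))) (hUconv : Convex ℝ U) (hUcomp : IsCompact U)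
    (φ : EuclideanSpace ℝ (Fin n) → EuclideanSpace ℝ (Fin r) → EuclideanSpace ℝ (Fin n))
    (L : NNReal) (hφ : LipschitzWith L (Function.uncurry φ))
    (x₀ : EuclideanSpace ℝ (Fin n))
    (isControl : (ℝ → EuclideanSpace ℝ (Fin r)) → Prop)
    (hisControl : ∀ v, isControl v ↔ Measurable v ∧ ∀ τ ∈ Icc 0 T, v τ ∈ U)
    (x : (ℝ → EuclideanSpace ℝ (Fin r)) → ℝ → EuclideanSpace ℝ (Fin n))
    (hxsol : ∀ v, isControl v → ContinuousOn (x v) (Icc 0 T) ∧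
      ∀ t ∈ Icc 0 T, x v t = x₀ + ∫ τ in (0:ℝ)..t, φ (x v τ) (v τ))
    (hxuniq : ∀ v, isControl v → ∀ y : ℝ → EuclideanSpace ℝ (Fin n),
      ContinuousOn y (Icc 0 T) →
      (∀ t ∈ Icc 0 T, y t = x₀ + ∫ τ in (0:ℝ)..t, φ (y τ) (v τ)) →
      ∀ t ∈ Icc 0 T, y t = x v t)
    (u : ℕ → ℝ → EuclideanSpace ℝ (Fin r)) (ulim : ℝ → EuclideanSpace ℝ (Fin r))
    (hu : ∀ k, isControl (u k)) (hulim : isControl ulim)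
    (huconv : Tendsto (fun k => ∫ τ in (0:ℝ)..T, ‖u k τ - ulim τ‖) atTop (nhds 0)) :
    TendstoUniformlyOn (fun k => x (u k)) (x ulim) atTop (Icc 0 T) :=
  statement5_general T U hUcomp φ L hφ x₀ isControl hisControl x hxsol u ulim hu hulim huconv
end
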